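/- arXiv:1812.01800 — 2 statements merged into one kernel-verified Lean document; each statement's English description precedes it below -/
import Mathlib

section
/- Let R be a round local tournament on r ≥ 2 vertices and let D* = R[V_1, …, V_r] be an extension of R (each V_i a nonempty arcless digraph). Then D* has a vertex that is simultaneously a Sullivan-1 vertex and a Sullivan-2 vertex of D*. -/
/-- The out-neighbourhood of `x` in the digraph with arc relation `A`. -/
def Nplus {V : Type*} (A : V → V → Prop) (x : V) : Set V := {y | A x y}

/-- The in-neighbourhood of `x`. -/
def Nminus {V : Type*} (A : V → V → Prop) (x : V) : Set V := {y | A y x}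

/-- The second out-neighbourhood of `x`:
`(⋃ u ∈ N⁺(x), N⁺(u)) \ N⁺(x)`. -/
def Nsecond {V : Type*} (A : V → V → Prop) (x : V) : Set V :=
  (⋃ u ∈ Nplus A x, Nplus A u) \ Nplus A x

/-- Out-degree `d⁺(x)`. -/
noncomputable def dplus {V : Type*} (A : V → V → Prop) (x : V) : ℕ := (Nplus A x).ncard

/-- In-degree `d⁻(x)`. -/
noncomputable def dminus {V : Type*} (A : V → V → Prop) (x : V) : ℕ := (Nminus A x).ncard

/-- Second out-degree `d⁺⁺(x)`. -/
noncomputable def dsecond {V : Type*} (A : V → V → Prop) (x : V) : ℕ := (Nsecond A x).ncard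

/-- `x` is a Sullivan-1 vertex: `d⁺⁺(x) ≥ d⁻(x)`. -/
def Sullivan1 {V : Type*} (A : V → V → Prop) (x : V) : Prop :=
  dminus A x ≤ dsecond A x

/-- `x` is a Sullivan-2 vertex: `d⁺⁺(x) + d⁺(x) ≥ 2·d⁻(x)`. -/
def Sullivan2 {V : Type*} (A : V → V → Prop) (x : V) : Prop :=
  2 * dminus A x ≤ dsecond A x + dplus A x

/-- Two vertices are adjacent if there is an arc between them in some direction. -/
def Adjacent {V : Type*} (A : V → V → Prop) (x y : V) : Prop := A x y ∨ A y x

/-- An oriented graph: no loops and no 2-cycles. -/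
def IsOriented {V : Type*} (A : V → V → Prop) : Prop :=
  (∀ x, ¬ A x x) ∧ ∀ x y, A x y → ¬ A y x

/-- A local tournament: an oriented graph in which any two distinct out-neighbours
of a vertex are adjacent, and any two distinct in-neighbours are adjacent. -/
def IsLocalTournament {V : Type*} (A : V → V → Prop) : Prop :=
  IsOriented A ∧
  (∀ x y z, A x y → A x z → y ≠ z → Adjacent A y z) ∧
  (∀ x y z, A y x → A z x → y ≠ z → Adjacent A y z)

/-- A tournament: an oriented graph in which any two distinct vertices are adjacent. -/
def IsTournament {V : Type*} (A : V → V → Prop) : Prop :=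
  IsOriented A ∧ ∀ x y : V, x ≠ y → Adjacent A x y

/-- A digraph is strong if every vertex can reach every other by a directed path. -/
def IsStrong {V : Type*} (A : V → V → Prop) : Prop :=
  ∀ x y : V, Relation.ReflTransGen A x y

/-- A digraph on `ZMod r` is roundly labelled (by the natural labelling `0,1,…,r-1`)
if for each vertex `i` the out-neighbourhood is `{i+1, …, i+d⁺(i)}` and the
in-neighbourhood is `{i−d⁻(i), …, i−1}` (indices modulo `r`). -/
def IsRoundLabelling {r : ℕ} (B : ZMod r → ZMod r → Prop) : Prop :=
  ∀ i : ZMod r,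
    Nplus B i = (fun t : ℕ => i + (t : ZMod r)) '' Set.Icc 1 (dplus B i) ∧
    Nminus B i = (fun t : ℕ => i - (t : ZMod r)) '' Set.Icc 1 (dminus B i)

/-- A digraph is round if its vertices admit a round labelling. -/
def IsRound {V : Type*} (A : V → V → Prop) : Prop :=
  ∃ r : ℕ, 0 < r ∧ ∃ e : ZMod r ≃ V,
    IsRoundLabelling (fun i j => A (e i) (e j))

/-- A digraph `A` on `V` is round decomposable: `A = R[S₁,…,S_r]` where `R` is a
round local tournament on `r ≥ 2` vertices (realized on `ZMod r`), the parts are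
the fibres of a surjection `φ : V → ZMod r` (so all parts are nonempty and pairwise
disjoint), arcs between distinct parts are exactly those induced by `R`, and each
part induces a strong tournament. -/
def IsRoundDecomposable {V : Type*} (A : V → V → Prop) : Prop :=
  ∃ (r : ℕ) (B : ZMod r → ZMod r → Prop) (φ : V → ZMod r),
    2 ≤ r ∧ IsLocalTournament B ∧ IsRound B ∧ Function.Surjective φ ∧
    (∀ x y, φ x ≠ φ y → (A x y ↔ B (φ x) (φ y))) ∧
    (∀ x y, φ x = φ y → x ≠ y → Adjacent A x y) ∧
    (∀ i : ZMod r, ∀ x y, φ x = i → φ y = i →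
      Relation.ReflTransGen (fun a b => A a b ∧ φ a = i ∧ φ b = i) x y)


/-!
In an extension `D* = R[V₁, …, V_r]` all neighbourhoods are unions of parts, so a vertex `x`
is Sullivan-1 and Sullivan-2 as soon as some vertices `y`, `z` of in-degree at least `d⁻(x)`
have `N⁻(y) ⊆ N⁺⁺(x)` and `N⁻(z) ⊆ N⁺(x)`; take `x` of minimum in-degree. In the round
labelling of `R`, for `p` the part of `x`, the vertex `p + d⁺(p) + 1` just after the
out-interval of `p` has all its in-neighbours inside that interval, and likewise the vertex
just after the out-interval of the last out-neighbour `m = p + d⁺(p)` has its in-neighbours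
in `N⁺(m)`, which lies in `N⁺⁺(p)` because `R` has no 2-cycles.
-/

theorem sullivan_of_nminus_subset {V : Type*} [Finite V] {A : V → V → Prop} {x y z : V}
    (hy : dminus A x ≤ dminus A y) (hz : dminus A x ≤ dminus A z)
    (hyx : Nminus A y ⊆ Nsecond A x) (hzx : Nminus A z ⊆ Nplus A x) :
    Sullivan1 A x ∧ Sullivan2 A x := by
  have h1 : dminus A x ≤ dsecond A x := hy.trans (Set.ncard_le_ncard hyx (Set.toFinite _))
  have h2 : dminus A x ≤ dplus A x := hz.trans (Set.ncard_le_ncard hzx (Set.toFinite _))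
  exact ⟨h1, by unfold Sullivan2; omega⟩

section Extension

variable {V W : Type*} {A : V → V → Prop} {B : W → W → Prop} {φ : V → W}

theorem nplus_eq_preimage (hA : ∀ x y, A x y ↔ B (φ x) (φ y)) (x : V) :
    Nplus A x = φ ⁻¹' Nplus B (φ x) :=
  Set.ext fun y => hA x y

theorem nminus_eq_preimage (hA : ∀ x y, A x y ↔ B (φ x) (φ y)) (x : V) :
    Nminus A x = φ ⁻¹' Nminus B (φ x) :=
  Set.ext fun y => hA y x

theorem nsecond_eq_preimage (hA : ∀ x y, A x y ↔ B (φ x) (φ y))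
    (hφ : Function.Surjective φ) (x : V) :
    Nsecond A x = φ ⁻¹' Nsecond B (φ x) := by
  ext y
  simp only [Nsecond, Set.mem_sdiff, Set.mem_iUnion, Set.mem_preimage, exists_prop,
    nplus_eq_preimage hA]
  constructor
  · rintro ⟨⟨u, hxu, huy⟩, hxy⟩
    exact ⟨⟨φ u, hxu, huy⟩, hxy⟩
  · rintro ⟨⟨w, hxw, hwy⟩, hxy⟩
    obtain ⟨u, rfl⟩ := hφ w
    exact ⟨⟨u, hxw, hwy⟩, hxy⟩

end Extension

namespace IsRoundLabelling

variable {r : ℕ} {B : ZMod r → ZMod r → Prop}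

theorem mem_nplus_iff (hB : IsRoundLabelling B) {p q : ZMod r} :
    q ∈ Nplus B p ↔ ∃ t ∈ Set.Icc 1 (dplus B p), p + (t : ZMod r) = q := by
  rw [(hB p).1]
  rfl

theorem mem_nminus_iff (hB : IsRoundLabelling B) {p q : ZMod r} :
    q ∈ Nminus B p ↔ ∃ t ∈ Set.Icc 1 (dminus B p), p - (t : ZMod r) = q := by
  rw [(hB p).2]
  rfl

theorem add_mem_nplus (hB : IsRoundLabelling B) {p : ZMod r} {t : ℕ} (h1 : 1 ≤ t)
    (ht : t ≤ dplus B p) : p + (t : ZMod r) ∈ Nplus B p :=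
  hB.mem_nplus_iff.2 ⟨t, ⟨h1, ht⟩, rfl⟩

theorem sub_mem_nminus (hB : IsRoundLabelling B) {p : ZMod r} {t : ℕ} (h1 : 1 ≤ t)
    (ht : t ≤ dminus B p) : p - (t : ZMod r) ∈ Nminus B p :=
  hB.mem_nminus_iff.2 ⟨t, ⟨h1, ht⟩, rfl⟩

theorem le_dplus_of_add_mem_nplus (hB : IsRoundLabelling B) {p : ZMod r} {t : ℕ}
    (ht : t ≤ r) (h : p + (t : ZMod r) ∈ Nplus B p) : t ≤ dplus B p := by
  obtain ⟨s, ⟨hs1, hs⟩, hst⟩ := hB.mem_nplus_iff.1 h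
  by_contra! hlt
  have hmod := (ZMod.natCast_eq_natCast_iff' s t r).1 (add_left_cancel hst)
  rw [Nat.mod_eq_of_lt (by omega : s < r)] at hmod
  rcases ht.lt_or_eq with ht | rfl
  · rw [Nat.mod_eq_of_lt ht] at hmod
    omega
  · rw [Nat.mod_self] at hmod
    omega

theorem dplus_lt [NeZero r] (hB : IsRoundLabelling B) (hirr : ∀ p, ¬ B p p) (p : ZMod r) :
    dplus B p < r := by
  by_contra! h
  have hp := hB.add_mem_nplus NeZero.one_le h
  rw [ZMod.natCast_self, add_zero] at hp
  exact hirr p hp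

theorem nminus_add_dplus_succ_subset_nplus [NeZero r] (hB : IsRoundLabelling B)
    (hirr : ∀ p, ¬ B p p) (p : ZMod r) :
    Nminus B (p + ((dplus B p + 1 : ℕ) : ZMod r)) ⊆ Nplus B p := by
  obtain ⟨a, ha⟩ : ∃ a, dplus B p = a := ⟨_, rfl⟩
  have har : a < r := ha ▸ hB.dplus_lt hirr p
  rw [ha]
  intro q hq
  obtain ⟨t, ⟨ht1, ht⟩, rfl⟩ := hB.mem_nminus_iff.1 hq
  rcases le_or_gt t a with hta | hta
  · convert hB.add_mem_nplus (p := p) (t := a + 1 - t) (by omega) (by omega) using 2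
    rw [Nat.cast_sub (by omega)]
    ring
  · have hp := hB.sub_mem_nminus (p := p + ((a + 1 : ℕ) : ZMod r)) (t := a + 1) (by omega)
      (by omega)
    rw [add_sub_cancel_right] at hp
    have := hB.le_dplus_of_add_mem_nplus (by omega) hp
    omega

theorem nplus_add_dplus_subset_nsecond [NeZero r] (hB : IsRoundLabelling B) (hor : IsOriented B)
    (p : ZMod r) : Nplus B (p + (dplus B p : ZMod r)) ⊆ Nsecond B p := by
  obtain ⟨a, ha⟩ : ∃ a, dplus B p = a := ⟨_, rfl⟩
  have har : a < r := ha ▸ hB.dplus_lt hor.1 p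
  rw [ha]
  rcases Nat.eq_zero_or_pos a with rfl | hapos
  · have hempty : Nplus B p = ∅ := (Set.ncard_eq_zero (Set.toFinite _)).1 ha
    simp [hempty]
  have hm : p + (a : ZMod r) ∈ Nplus B p := hB.add_mem_nplus hapos ha.ge
  -- otherwise the out-interval of `m = p + a` would wrap around to `p`, closing a 2-cycle
  have hwrap : a + dplus B (p + a) < r := by
    by_contra! h
    have hmp := hB.add_mem_nplus (p := p + a) (t := r - a) (by omega) (by omega)
    rw [Nat.cast_sub har.le, ZMod.natCast_self, zero_sub, add_neg_cancel_right] at hmp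
    exact hor.2 _ _ hm hmp
  intro y hy
  obtain ⟨s, ⟨hs1, hs⟩, rfl⟩ := hB.mem_nplus_iff.1 hy
  refine ⟨Set.mem_biUnion hm hy, fun hy' => ?_⟩
  rw [add_assoc, ← Nat.cast_add] at hy'
  have := hB.le_dplus_of_add_mem_nplus (by omega) hy'
  omega

end IsRoundLabelling

theorem exists_sullivan_of_extension_of_roundLabelling {V : Type*} [Finite V] {r : ℕ}
    [NeZero r] {B : ZMod r → ZMod r → Prop} (hor : IsOriented B) (hB : IsRoundLabelling B)
    {φ : V → ZMod r} (hφ : Function.Surjective φ) {A : V → V → Prop}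
    (hA : ∀ x y, A x y ↔ B (φ x) (φ y)) :
    ∃ x, Sullivan1 A x ∧ Sullivan2 A x := by
  have : Nonempty V := ⟨(hφ 0).choose⟩
  obtain ⟨x, hx⟩ := Finite.exists_min (dminus A)
  set i := φ x
  set m := i + (dplus B i : ZMod r)
  obtain ⟨y, hy⟩ := hφ (m + ((dplus B m + 1 : ℕ) : ZMod r))
  obtain ⟨z, hz⟩ := hφ (i + ((dplus B i + 1 : ℕ) : ZMod r))
  refine ⟨x, sullivan_of_nminus_subset (hx y) (hx z) ?_ ?_⟩
  · rw [nminus_eq_preimage hA, nsecond_eq_preimage hA hφ, hy]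
    exact Set.preimage_mono <| (hB.nminus_add_dplus_succ_subset_nplus hor.1 m).trans
      (hB.nplus_add_dplus_subset_nsecond hor i)
  · rw [nminus_eq_preimage hA, nplus_eq_preimage hA, hz]
    exact Set.preimage_mono (hB.nminus_add_dplus_succ_subset_nplus hor.1 i)

theorem extension_of_round_has_sullivan_vertex_general {V : Type*} [Fintype V]
    (r : ℕ)
    (B : ZMod r → ZMod r → Prop) (hB : IsLocalTournament B) (hBround : IsRound B)
    (φ : V → ZMod r) (hφ : Function.Surjective φ)
    (Astar : V → V → Prop) (hAstar : ∀ x y, Astar x y ↔ B (φ x) (φ y)) :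
    ∃ x : V, Sullivan1 Astar x ∧ Sullivan2 Astar x := by
  obtain ⟨n, hn, e, he⟩ := hBround
  have : NeZero n := ⟨hn.ne'⟩
  exact exists_sullivan_of_extension_of_roundLabelling
    ⟨fun i => hB.1.1 (e i), fun i j => hB.1.2 (e i) (e j)⟩ he
    (e.symm.surjective.comp hφ) (fun x y => by simp [hAstar])

/-- Let `R` be a round local tournament on `r ≥ 2` vertices (realized on `ZMod r` by
the relation `B`) and let `D* = R[V_1, …, V_r]` be an extension of `R`, i.e. the
(nonempty, arcless) parts are the fibres of a surjection `φ : V → ZMod r` and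
`Astar x y ↔ B (φ x) (φ y)`.  Then `D*` has a vertex that is simultaneously a
Sullivan-1 vertex and a Sullivan-2 vertex of `D*`. -/
theorem extension_of_round_has_sullivan_vertex {V : Type*} [Fintype V]
    (r : ℕ) (hr : 2 ≤ r)
    (B : ZMod r → ZMod r → Prop) (hB : IsLocalTournament B) (hBround : IsRound B)
    (φ : V → ZMod r) (hφ : Function.Surjective φ)
    (Astar : V → V → Prop) (hAstar : ∀ x y, Astar x y ↔ B (φ x) (φ y)) :
    ∃ x : V, Sullivan1 Astar x ∧ Sullivan2 Astar x :=
  extension_of_round_has_sullivan_vertex_general r B hB hBround φ hφ Astar hAstar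
end

section
/- Let D be an oriented graph and let C be a set of vertices of D such that there is no arc from a vertex outside C to a vertex in C. If a vertex v ∈ C is a Sullivan-1 vertex (respectively, a Sullivan-2 vertex) of the subdigraph of D induced by C, then v is a Sullivan-1 vertex (respectively, a Sullivan-2 vertex) of D. -/
def inducedArcs {V : Type*} (A : V → V → Prop) (C : Set V) : V → V → Prop :=
  fun a b => A a b ∧ a ∈ C ∧ b ∈ C

section Induced

variable {V : Type*} {A : V → V → Prop} {C : Set V} {v : V}

theorem Nplus_inducedArcs_subset : Nplus (inducedArcs A C) v ⊆ Nplus A v :=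
  fun _ h => h.1

theorem Nminus_inducedArcs_of_initial (hC : ∀ x y : V, x ∉ C → y ∈ C → ¬ A x y) (hv : v ∈ C) :
    Nminus (inducedArcs A C) v = Nminus A v := by
  ext y
  refine ⟨fun h => h.1, fun h => ⟨h, ?_, hv⟩⟩
  by_contra hy
  exact hC y v hy hv h

theorem Nsecond_inducedArcs_subset (hv : v ∈ C) : Nsecond (inducedArcs A C) v ⊆ Nsecond A v := by
  rintro y ⟨hy, hvy⟩
  obtain ⟨u, hu, huy⟩ := Set.mem_iUnion₂.mp hy
  refine ⟨Set.mem_iUnion₂.mpr ⟨u, hu.1, huy.1⟩, fun hAvy => hvy ⟨hAvy, hv, huy.2.2⟩⟩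

theorem dminus_inducedArcs_of_initial (hC : ∀ x y : V, x ∉ C → y ∈ C → ¬ A x y) (hv : v ∈ C) :
    dminus (inducedArcs A C) v = dminus A v := by
  rw [dminus, dminus, Nminus_inducedArcs_of_initial hC hv]

variable [Finite V]

theorem dplus_inducedArcs_le : dplus (inducedArcs A C) v ≤ dplus A v :=
  Set.ncard_le_ncard Nplus_inducedArcs_subset

theorem dsecond_inducedArcs_le (hv : v ∈ C) : dsecond (inducedArcs A C) v ≤ dsecond A v :=
  Set.ncard_le_ncard (Nsecond_inducedArcs_subset hv)

end Induced

theorem sullivan_of_initial_induced_subdigraph_general {V : Type*} [Fintype V]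
    (A : V → V → Prop)
    (C : Set V) (hC : ∀ x y : V, x ∉ C → y ∈ C → ¬ A x y)
    (v : V) (hv : v ∈ C) :
    (Sullivan1 (fun a b => A a b ∧ a ∈ C ∧ b ∈ C) v → Sullivan1 A v) ∧
    (Sullivan2 (fun a b => A a b ∧ a ∈ C ∧ b ∈ C) v → Sullivan2 A v) := by
  have hminus := dminus_inducedArcs_of_initial hC hv
  have hplus : dplus (inducedArcs A C) v ≤ dplus A v := dplus_inducedArcs_le
  have hsecond : dsecond (inducedArcs A C) v ≤ dsecond A v := dsecond_inducedArcs_le hv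
  refine ⟨fun h => ?_, fun h => ?_⟩
  · calc dminus A v = dminus (inducedArcs A C) v := hminus.symm
      _ ≤ dsecond (inducedArcs A C) v := h
      _ ≤ dsecond A v := hsecond
  · calc 2 * dminus A v = 2 * dminus (inducedArcs A C) v := by rw [hminus]
      _ ≤ dsecond (inducedArcs A C) v + dplus (inducedArcs A C) v := h
      _ ≤ dsecond A v + dplus A v := add_le_add hsecond hplus

/-- Let `D` be an oriented graph and `C` a set of vertices such that there is no arc
from a vertex outside `C` to a vertex in `C`.  If `v ∈ C` is a Sullivan-1
(respectively Sullivan-2) vertex of the subdigraph induced by `C`, then `v` is a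
Sullivan-1 (respectively Sullivan-2) vertex of `D`. -/
theorem sullivan_of_initial_induced_subdigraph {V : Type*} [Fintype V]
    (A : V → V → Prop) (hA : IsOriented A)
    (C : Set V) (hC : ∀ x y : V, x ∉ C → y ∈ C → ¬ A x y)
    (v : V) (hv : v ∈ C) :
    (Sullivan1 (fun a b => A a b ∧ a ∈ C ∧ b ∈ C) v → Sullivan1 A v) ∧
    (Sullivan2 (fun a b => A a b ∧ a ∈ C ∧ b ∈ C) v → Sullivan2 A v) :=
  sullivan_of_initial_induced_subdigraph_general A C hC v hv
end
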